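/- For n ≥ 2 and any graph H, the optimal pebbling number of the neighbourhood corona K_n ⋆ H is 3. -/
import Mathlib



open SimpleGraph

variable {V : Type*}

/-- A single pebbling move: remove two pebbles from `u`, add one to a neighbor `v`. -/
def PebblingMove (G : SimpleGraph V) (c c' : V → ℕ) : Prop :=
  ∃ u v, G.Adj u v ∧ 2 ≤ c u ∧
    c' u = c u - 2 ∧ c' v = c v + 1 ∧ ∀ w, w ≠ u → w ≠ v → c' w = c w

/-- `c'` is reachable from `c` by a sequence of pebbling moves. -/
def PebblingReach (G : SimpleGraph V) (c c' : V → ℕ) : Prop :=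
  Relation.ReflTransGen (PebblingMove G) c c'

/-- A configuration is `t`-fold `r`-solvable if some sequence of pebbling moves
places at least `t` pebbles on `r`. -/
def PebblingSolvable (G : SimpleGraph V) (c : V → ℕ) (r : V) (t : ℕ) : Prop :=
  ∃ c', PebblingReach G c c' ∧ t ≤ c' r

variable [Fintype V]

/-- The set of sizes `m` such that every configuration of size `m` is
`t`-fold `r`-solvable for every target `r`. -/
def pebblingSet (G : SimpleGraph V) (t : ℕ) : Set ℕ :=
  {m | ∀ c : V → ℕ, (∑ v, c v) = m → ∀ r : V, PebblingSolvable G c r t}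

/-- The `t`-fold pebbling number, as an extended natural number
(`⊤` when no bound exists, e.g. for disconnected graphs). -/
noncomputable def pebblingNumber (G : SimpleGraph V) (t : ℕ) : ℕ∞ :=
  sInf ((↑) '' pebblingSet G t)

/-- A configuration is cover-solvable if pebbling moves can reach a configuration
with at least one pebble on every vertex. -/
def IsCoverSolvable (G : SimpleGraph V) (c : V → ℕ) : Prop :=
  ∃ c', PebblingReach G c c' ∧ ∀ v : V, 1 ≤ c' v

/-- The cover pebbling number. -/
noncomputable def coverPebblingNumber (G : SimpleGraph V) : ℕ∞ :=
  sInf ((↑) '' {m : ℕ | ∀ c : V → ℕ, (∑ v, c v) = m → IsCoverSolvable G c})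

/-- The optimal pebbling number: the least size of a single configuration that is
`r`-solvable for every vertex `r`. -/
noncomputable def optimalPebblingNumber (G : SimpleGraph V) : ℕ∞ :=
  sInf ((↑) '' {m : ℕ | ∃ c : V → ℕ, (∑ v, c v) = m ∧ ∀ r : V, PebblingSolvable G c r 1})

/-- The neighbourhood corona `G ⋆ H`. -/
def ncoronaProd {α β : Type*} (G : SimpleGraph α) (H : SimpleGraph β) :
    SimpleGraph (α ⊕ α × β) :=
  SimpleGraph.fromRel (fun u v =>
    match u, v with
    | Sum.inl a, Sum.inl b => G.Adj a b
    | Sum.inl a, Sum.inr p => G.Adj a p.1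
    | Sum.inr p, Sum.inr q => p.1 = q.1 ∧ H.Adj p.2 q.2
    | _, _ => False)

lemma move_step [DecidableEq V] {G : SimpleGraph V} {c : V → ℕ} {u v : V} (h : G.Adj u v) (h2 : 2 ≤ c u) :
    PebblingMove G c (Function.update (Function.update c u (c u - 2)) v (c v + 1)) := by
  have huv : u ≠ v := h.ne
  refine ⟨u, v, h, h2, ?_, ?_, ?_⟩
  · simp [Function.update, huv]
  · simp [Function.update]
  · intro w hwu hwv; simp [Function.update, hwu, hwv]

lemma reach_stuck {G : SimpleGraph V} {c c' : V → ℕ} (h : PebblingReach G c c')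
    (hb : ∀ w, c w ≤ 1) : c' = c := by
  rcases (Relation.ReflTransGen.cases_head h) with h | ⟨c₁, ⟨u, v, _, hu, _⟩, _⟩
  · exact h.symm
  · exact absurd (hb u) (by omega)

lemma pair_le_sum [Fintype V] [DecidableEq V] {c : V → ℕ} {u w : V} (h : u ≠ w) : c u + c w ≤ ∑ v, c v := by
  rw [← Finset.sum_pair h]
  exact Finset.sum_le_sum_of_subset (Finset.subset_univ _)

lemma solvable_small [Fintype V] [DecidableEq V] {G : SimpleGraph V} {c : V → ℕ} (hsum : ∑ v, c v ≤ 2)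
    {r : V} (h : PebblingSolvable G c r 1) :
    1 ≤ c r ∨ ∃ u, 2 ≤ c u ∧ G.Adj u r := by
  obtain ⟨c', hreach, hr⟩ := h
  rcases (Relation.ReflTransGen.cases_head hreach) with heq | ⟨c₁, hmove, hreach₁⟩
  · left; rwa [heq]
  · obtain ⟨u, v, hadj, hu, h1, h2, h3⟩ := hmove
    have huv : u ≠ v := hadj.ne
    have hc0 : ∀ w, w ≠ u → c w = 0 := by
      intro w hw
      have := pair_le_sum (c := c) (Ne.symm hw)
      omega
    have hcu : c u = 2 := by
      have := pair_le_sum (c := c) huv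
      omega
    have hc₁ : ∀ w, c₁ w ≤ 1 := by
      intro w
      by_cases hwu : w = u
      · subst hwu; omega
      · by_cases hwv : w = v
        · rw [hwv, h2, hc0 v (Ne.symm huv)]
        · rw [h3 w hwu hwv, hc0 w hwu]; omega
    have hfin := reach_stuck hreach₁ hc₁
    subst hfin
    right
    refine ⟨u, hu, ?_⟩
    by_cases hru : r = u
    · subst hru; omega
    by_cases hrv : r = v
    · subst hrv; exact hadj
    · rw [h3 r hru hrv, hc0 r hru] at hr; omega

lemma sum_two_one [Fintype V] [DecidableEq V] {A B : V} (hAB : A ≠ B) :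
    ∑ v, (if v = A then 2 else if v = B then (1:ℕ) else 0) = 3 := by
  have h : (fun v => if v = A then (2:ℕ) else if v = B then 1 else 0)
      = fun v => (if v = A then 2 else 0) + (if v = B then 1 else 0) := by
    funext v
    by_cases h1 : v = A
    · subst h1; simp [hAB]
    · simp [h1]
  rw [show (∑ v, (if v = A then 2 else if v = B then (1:ℕ) else 0))
      = ∑ v, ((if v = A then 2 else 0) + (if v = B then 1 else 0)) from
    Finset.sum_congr rfl fun v _ => congrFun h v]
  rw [Finset.sum_add_distrib]
  simp [Finset.sum_ite_eq']

lemma solvable_refl {G : SimpleGraph V} {c : V → ℕ} {r : V} (h : 1 ≤ c r) :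
    PebblingSolvable G c r 1 := ⟨c, Relation.ReflTransGen.refl, h⟩

lemma solvable_one [DecidableEq V] {G : SimpleGraph V} {c : V → ℕ} {u r : V}
    (h : G.Adj u r) (h2 : 2 ≤ c u) : PebblingSolvable G c r 1 := by
  refine ⟨_, Relation.ReflTransGen.single (move_step h h2), ?_⟩
  simp

lemma solvable_two [DecidableEq V] {G : SimpleGraph V} {c : V → ℕ} {u v r : V}
    (h1 : G.Adj u v) (h2 : G.Adj v r) (hc : 2 ≤ c u) (hcv : 1 ≤ c v) :
    PebblingSolvable G c r 1 := by
  set c₁ := Function.update (Function.update c u (c u - 2)) v (c v + 1) with hc₁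
  have hv : 2 ≤ c₁ v := by simp [hc₁]; omega
  refine ⟨_, (Relation.ReflTransGen.single (move_step h1 hc)).tail (move_step h2 hv), ?_⟩
  simp

/-- For `n ≥ 2` and any graph `H`, the optimal pebbling number of `K n ⋆ H` is `3`. -/
theorem optimalPebblingNumber_Kn_ncorona (n : ℕ) (hn : 2 ≤ n)
    {β : Type*} [Fintype β] [Nonempty β] (H : SimpleGraph β) :
    optimalPebblingNumber (ncoronaProd (⊤ : SimpleGraph (Fin n)) H) = (3 : ℕ∞) := by
  classical
  set G := ncoronaProd (⊤ : SimpleGraph (Fin n)) H with hG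
  have hll : ∀ x y : Fin n, x ≠ y → G.Adj (Sum.inl x) (Sum.inl y) := by
    intro x y h; simp [hG, ncoronaProd, SimpleGraph.fromRel_adj, h]
  have hlr : ∀ (x : Fin n) (p : Fin n × β), x ≠ p.1 → G.Adj (Sum.inl x) (Sum.inr p) := by
    intro x p h; simp [hG, ncoronaProd, SimpleGraph.fromRel_adj, h]
  have hnlr : ∀ (p : Fin n × β), ¬ G.Adj (Sum.inl p.1) (Sum.inr p) := by
    intro p; simp [hG, ncoronaProd, SimpleGraph.fromRel_adj]
  have hnrl : ∀ (p : Fin n × β), ¬ G.Adj (Sum.inr p) (Sum.inl p.1) := by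
    intro p h; exact hnlr p h.symm
  apply le_antisymm
  · apply sInf_le
    refine ⟨3, ?_, rfl⟩
    set a : Fin n := ⟨0, by omega⟩ with ha
    set b : Fin n := ⟨1, by omega⟩ with hb
    have hab : a ≠ b := by simp [ha, hb, Fin.ext_iff]
    set A : Fin n ⊕ Fin n × β := Sum.inl a with hA
    set B : Fin n ⊕ Fin n × β := Sum.inl b with hB
    have hAB : A ≠ B := by simp [hA, hB, hab]
    set c : (Fin n ⊕ Fin n × β) → ℕ := fun v => if v = A then 2 else if v = B then 1 else 0
      with hc
    have hcA : 2 ≤ c A := by simp [hc]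
    have hcB : 1 ≤ c B := by simp [hc, hAB.symm]
    refine ⟨c, ?_, ?_⟩
    · simp only [hc]
      exact sum_two_one hAB
    · intro r
      match r with
      | Sum.inl x =>
        by_cases hx : x = a
        · subst hx; exact solvable_refl (le_trans one_le_two hcA)
        · exact solvable_one (hll a x (Ne.symm (by simpa using hx))) hcA
      | Sum.inr p =>
        by_cases hp : p.1 = a
        · refine solvable_two (hll a b hab) (hlr b p ?_) hcA hcB
          rw [hp]; exact hab.symm
        · exact solvable_one (hlr a p (fun h => hp h.symm)) hcA
  · apply le_sInf
    rintro x ⟨m, ⟨c, hsum, hsolv⟩, rfl⟩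
    rw [show ((3:ℕ∞)) = ((3:ℕ):ℕ∞) by rfl, Nat.cast_le]
    by_contra hlt
    push_neg at hlt
    have hsum2 : ∑ v, c v ≤ 2 := by omega
    by_cases hex : ∃ u, 2 ≤ c u
    · obtain ⟨u, hu⟩ := hex
      have hc0 : ∀ w, w ≠ u → c w = 0 := by
        intro w hw
        have := pair_le_sum (c := c) (Ne.symm hw)
        omega
      obtain ⟨r, hru, hnadj⟩ : ∃ r, r ≠ u ∧ ¬ G.Adj u r := by
        match u with
        | Sum.inl x =>
          exact ⟨Sum.inr (x, Classical.arbitrary β), by simp, hnlr (x, Classical.arbitrary β)⟩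
        | Sum.inr p =>
          exact ⟨Sum.inl p.1, by simp, hnrl p⟩
      rcases solvable_small hsum2 (hsolv r) with h | ⟨u', hu', hadj⟩
      · rw [hc0 r hru] at h; omega
      · by_cases huu : u' = u
        · rw [huu] at hadj; exact hnadj hadj
        · rw [hc0 u' huu] at hu'; omega
    · push_neg at hex
      have hall : ∀ r, 1 ≤ c r := by
        intro r
        rcases solvable_small hsum2 (hsolv r) with h | ⟨u', hu', _⟩
        · exact h
        · exact absurd (hex u') (by omega)
      have hcard : ∑ _v : (Fin n ⊕ Fin n × β), 1 ≤ ∑ v, c v :=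
        Finset.sum_le_sum fun v _ => hall v
      simp only [Finset.sum_const, Finset.card_univ, smul_eq_mul, mul_one] at hcard
      rw [Fintype.card_sum, Fintype.card_prod, Fintype.card_fin] at hcard
      have hβ : 1 ≤ Fintype.card β := Fintype.card_pos
      nlinarith
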